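/- arXiv:2202.10766 — 4 statements merged into one kernel-verified Lean document; each statement's English description precedes it below -/
import Mathlib

section
/- For every Datalog program Σ, every annotated database (D,K,λ) with K a commutative ω-continuous semiring (and, for AM, additionally such that every subset of K has a greatest lower bound with respect to the natural order), and every fact α, it holds that AM(Σ,D,K,λ,α) ⊑ AT(Σ,D,K,λ,α) and SAM(Σ,D,K,λ,α) ⊑ AT(Σ,D,K,λ,α). -/
attribute [local instance] Classical.propDecidable

namespace Datalog

/-- Terms are built from constants and variables. -/
inductive Term (C V : Type) : Type
  | const : C → Term C V
  | var : V → Term C V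

/-- An atom over predicates `P` with arguments of type `τ`. -/
structure Atom (P τ : Type) : Type where
  pred : P
  args : List τ

/-- A fact (ground atom) has constants as arguments. -/
abbrev Fact (P C : Type) := Atom P C

/-- Substitution of a variable assignment in a term. -/
def Term.subst {C : Type} {n : ℕ} (σ : Fin n → C) : Term C (Fin n) → C
  | Term.const c => c
  | Term.var v => σ v

/-- Substitution of a variable assignment in an atom, producing a fact. -/
def Atom.subst {P C : Type} {n : ℕ} (σ : Fin n → C) (a : Atom P (Term C (Fin n))) : Fact P C :=
  ⟨a.pred, a.args.map (Term.subst σ)⟩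

/-- Renaming of predicates in an atom. -/
def Atom.mapPred {P Q τ : Type} (f : P → Q) (a : Atom P τ) : Atom Q τ := ⟨f a.pred, a.args⟩

/-- Turn a fact into a (ground) rule atom. -/
def Atom.toRuleAtom {P C : Type} (n : ℕ) (a : Fact P C) : Atom P (Term C (Fin n)) :=
  ⟨a.pred, a.args.map Term.const⟩

/-- A (normalized) Datalog rule `φ(x⃗,y⃗) → H(x⃗)`: the body is a conjunction of atoms over
variables `x⃗ ∪ y⃗` (every variable of the rule occurs in the body), the head a single atom. -/
structure Rule (P C : Type) : Type where
  nvars : ℕ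
  nbody : ℕ
  body : Fin nbody → Atom P (Term C (Fin nvars))
  head : Atom P (Term C (Fin nvars))
  vars_in_body : ∀ v : Fin nvars, ∃ i : Fin nbody, Term.var v ∈ (body i).args

variable {P C K : Type}

/-- A set of facts is closed under the rules of a program. -/
def ClosedUnder (prog : Set (Rule P C)) (I : Set (Fact P C)) : Prop :=
  ∀ r ∈ prog, ∀ σ : Fin r.nvars → C,
    (∀ i, (r.body i).subst σ ∈ I) → r.head.subst σ ∈ I

/-- `Σ, D ⊨ α` : the fact `α` belongs to every set of facts containing `D`
and closed under the rules of `Σ`. -/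
def Entails (prog : Set (Rule P C)) (D : Set (Fact P C)) (a : Fact P C) : Prop :=
  ∀ I : Set (Fact P C), D ⊆ I → ClosedUnder prog I → a ∈ I

/-- Derivation trees of a fact w.r.t. a program and a database: leaves are labeled by facts of
`D`; an inner node is labeled by a rule `r ∈ Σ` together with a homomorphism `σ`, its children
corresponding bijectively to the body atoms of `r`, and derives the fact `σ(head r)`. -/
inductive DTree {P C : Type} (prog : Set (Rule P C)) (D : Set (Fact P C)) : Fact P C → Type
  | leaf (a : Fact P C) (ha : a ∈ D) : DTree prog D a
  | node (r : Rule P C) (hr : r ∈ prog) (σ : Fin r.nvars → C)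
      (children : ∀ i : Fin r.nbody, DTree prog D ((r.body i).subst σ)) :
      DTree prog D (r.head.subst σ)

namespace DTree

variable {prog : Set (Rule P C)} {D : Set (Fact P C)}

/-- `Λ(t)`: the product of the annotations of the leaves of `t`. -/
def weight [CommSemiring K] (lam : Fact P C → K) : ∀ {a : Fact P C}, DTree prog D a → K
  | _, .leaf a _ => lam a
  | _, .node r _ _ ch => ∏ i : Fin r.nbody, weight lam (ch i)

/-- The depth of a derivation tree. -/
def depth : ∀ {a : Fact P C}, DTree prog D a → ℕ
  | _, .leaf _ _ => 0
  | _, .node r _ _ ch => (Finset.univ.sup fun i : Fin r.nbody => depth (ch i)) + 1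

/-- A derivation tree of `a` is of minimal depth if no derivation tree of `a` is of
smaller depth. -/
def minimalDepth {a : Fact P C} (t : DTree prog D a) : Prop :=
  ∀ t' : DTree prog D a, t.depth ≤ t'.depth

/-- A derivation tree is hereditary minimal-depth if every subtree rooted at an inner node
is a minimal-depth derivation tree of the fact it derives. -/
def hereditaryMinimal : ∀ {a : Fact P C}, DTree prog D a → Prop
  | _, .leaf _ _ => True
  | _, .node r hr σ ch =>
      minimalDepth (.node r hr σ ch) ∧ ∀ i, hereditaryMinimal (ch i)

/-- `t.avoid s` : no fact labeling a node of `t` belongs to `s`, nor is repeated along a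
root-to-leaf path. -/
def avoid : Set (Fact P C) → ∀ {a : Fact P C}, DTree prog D a → Prop
  | s, _, .leaf a _ => a ∉ s
  | s, _, .node r _ σ ch =>
      r.head.subst σ ∉ s ∧ ∀ i, avoid (insert (r.head.subst σ) s) (ch i)

/-- A derivation tree is non-recursive if it does not contain two nodes labeled with the same
fact such that one is a descendant of the other. -/
def nonRecursive {a : Fact P C} (t : DTree prog D a) : Prop := t.avoid ∅

/-- `t.hasLeaf x` : `x` labels some leaf of `t`. -/
def hasLeaf (x : Fact P C) : ∀ {a : Fact P C}, DTree prog D a → Prop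
  | _, .leaf a _ => a = x
  | _, .node _ _ _ ch => ∃ i, hasLeaf x (ch i)

end DTree

/-- The finite partial sums of `f` over the set `S`. -/
def partialSums {T : Type} [AddCommMonoid K] (S : Set T) (f : T → K) : Set K :=
  { x | ∃ F : Finset T, ↑F ⊆ S ∧ x = ∑ t ∈ F, f t }

/-- The (possibly infinite) sum of `f` over `S`, i.e. the least upper bound of the finite
partial sums (junk value `0` if no least upper bound exists). -/
noncomputable def setSum {T : Type} [AddCommMonoid K] [PartialOrder K]
    (S : Set T) (f : T → K) : K :=
  if h : ∃ s, IsLUB (partialSums S f) s then h.choose else 0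

/-- The greatest lower bound of a set of semiring elements (junk value `0` if none exists). -/
noncomputable def setInf [Zero K] [PartialOrder K] (S : Set K) : K :=
  if h : ∃ z, IsGLB S z then h.choose else 0

/-- A commutative ω-continuous semiring: the natural order `a ≤ b ↔ ∃ c, a + c = b` is a
partial order, every ω-chain has a least upper bound, and `+` and `×` preserve these
least upper bounds. -/
class OmegaCommSemiring (K : Type) extends CommSemiring K, PartialOrder K where
  le_iff_exists_add : ∀ a b : K, a ≤ b ↔ ∃ c, a + c = b
  chain_lub : ∀ f : ℕ → K, Monotone f → ∃ s, IsLUB (Set.range f) s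
  add_lub : ∀ (f : ℕ → K) (a s : K), Monotone f → IsLUB (Set.range f) s →
    IsLUB (Set.range fun n => a + f n) (a + s)
  mul_lub : ∀ (f : ℕ → K) (a s : K), Monotone f → IsLUB (Set.range f) s →
    IsLUB (Set.range fun n => a * f n) (a * s)

/-- A positive semiring: a product is zero iff one factor is, a sum is zero iff both
summands are. -/
def PositiveSemiring (K : Type) [CommSemiring K] : Prop :=
  (∀ a b : K, a * b = 0 ↔ a = 0 ∨ b = 0) ∧ (∀ a b : K, a + b = 0 ↔ a = 0 ∧ b = 0)

/-- An annotated database: a set of facts together with an annotation function assigning a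
semiring element to every fact (`0` outside the database). -/
structure AnnDB (P C K : Type) [Zero K] : Type where
  facts : Set (Fact P C)
  ann : Fact P C → K
  ann_eq_zero : ∀ a ∉ facts, ann a = 0

/-- Union of two annotated databases: annotations are added pointwise. -/
noncomputable def AnnDB.union [AddCommMonoid K] (d₁ d₂ : AnnDB P C K) : AnnDB P C K where
  facts := d₁.facts ∪ d₂.facts
  ann a := d₁.ann a + d₂.ann a
  ann_eq_zero a ha := by
    show d₁.ann a + d₂.ann a = 0
    rw [d₁.ann_eq_zero a fun h => ha (Set.mem_union_left _ h),
      d₂.ann_eq_zero a fun h => ha (Set.mem_union_right _ h), add_zero]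

/-- The facts derivable from `I` by one application of a rule of `prog`. -/
def derivable (prog : Set (Rule P C)) (I : Set (Fact P C)) : Set (Fact P C) :=
  { a | ∃ r ∈ prog, ∃ σ : Fin r.nvars → C,
      (∀ i, (r.body i).subst σ ∈ I) ∧ r.head.subst σ = a }

/-- The relational provenance of the immediate consequences: the sum over all rules and
homomorphisms deriving `a` of the product of the annotations of the body facts. -/
noncomputable def ruleSum [CommSemiring K] (prog : Set (Rule P C)) (I : Set (Fact P C))
    (lam : Fact P C → K) (a : Fact P C) : K :=
  ∑ᶠ (p : (r : Rule P C) × (Fin r.nvars → C))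
      (_ : p.1 ∈ prog ∧ (∀ i, (p.1.body i).subst p.2 ∈ I) ∧ p.1.head.subst p.2 = a),
    ∏ i : Fin p.1.nbody, lam ((p.1.body i).subst p.2)

/-- The annotation-aware immediate consequence operator `T_Σ`. -/
noncomputable def Tcons [CommSemiring K] (prog : Set (Rule P C)) (db : AnnDB P C K) :
    AnnDB P C K where
  facts := derivable prog db.facts
  ann a := if a ∈ derivable prog db.facts then ruleSum prog db.facts db.ann a else 0
  ann_eq_zero a ha := if_neg ha

/-- The operator `Δ_Σ`: `T_Σ` restricted to the newly derived facts. -/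
noncomputable def Dcons [CommSemiring K] (prog : Set (Rule P C)) (db : AnnDB P C K) :
    AnnDB P C K where
  facts := (Tcons prog db).facts \ db.facts
  ann a := if a ∈ (Tcons prog db).facts \ db.facts then (Tcons prog db).ann a else 0
  ann_eq_zero a ha := if_neg ha

/-- The naive evaluation sequence `I_n^0 := (D,K,λ)`, `I_n^{i+1} := T_Σ(I_n^i) ∪ (D,K,λ)`. -/
noncomputable def naiveSeq [CommSemiring K] (prog : Set (Rule P C)) (db : AnnDB P C K) :
    ℕ → AnnDB P C K
  | 0 => db
  | i + 1 => (Tcons prog (naiveSeq prog db i)).union db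

/-- The naive execution provenance semantics: the least upper bound of the annotations of `a`
along the naive evaluation sequence (and `0` if `a` is never derived). -/
noncomputable def NE [CommSemiring K] [PartialOrder K] (prog : Set (Rule P C))
    (db : AnnDB P C K) (a : Fact P C) : K :=
  if ∃ i, a ∈ (naiveSeq prog db i).facts then
    (if h : ∃ s, IsLUB (Set.range fun i => (naiveSeq prog db i).ann a) s then h.choose else 0)
  else 0

/-- The optimized naive evaluation sequence, which stops as soon as the target fact is
derived. -/
noncomputable def optSeq [CommSemiring K] (prog : Set (Rule P C)) (db : AnnDB P C K)
    (target : Fact P C) : ℕ → AnnDB P C K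
  | 0 => db
  | i + 1 =>
      if target ∈ (optSeq prog db target i).facts then optSeq prog db target i
      else (Tcons prog (optSeq prog db target i)).union db

/-- The optimized execution provenance semantics: the annotation of the target fact at the
stabilization point of the optimized naive evaluation sequence. -/
noncomputable def OE [CommSemiring K] (prog : Set (Rule P C)) (db : AnnDB P C K)
    (target : Fact P C) : K :=
  if h : ∃ k, ∀ ℓ, k ≤ ℓ → optSeq prog db target ℓ = optSeq prog db target k then
    (optSeq prog db target h.choose).ann target
  else 0

/-- The seminaive evaluation sequence `I_sn^0 := (D,K,λ)`, `I_sn^{i+1} := I_sn^i ∪ Δ_Σ(I_sn^i)`. -/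
noncomputable def semiSeq [CommSemiring K] (prog : Set (Rule P C)) (db : AnnDB P C K) :
    ℕ → AnnDB P C K
  | 0 => db
  | i + 1 => (semiSeq prog db i).union (Dcons prog (semiSeq prog db i))

/-- The seminaive execution provenance semantics: the annotation of the fact at the
stabilization point of the seminaive evaluation sequence. -/
noncomputable def SNE [CommSemiring K] (prog : Set (Rule P C)) (db : AnnDB P C K)
    (a : Fact P C) : K :=
  if h : ∃ k, ∀ ℓ, k ≤ ℓ → semiSeq prog db ℓ = semiSeq prog db k then
    (semiSeq prog db h.choose).ann a
  else 0

/-- The all-tree provenance semantics `AT`: the (possibly infinite) sum, over all derivation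
trees of `a`, of the product of the annotations of the leaves. -/
noncomputable def AT [CommSemiring K] [PartialOrder K] (prog : Set (Rule P C))
    (db : AnnDB P C K) (a : Fact P C) : K :=
  setSum (Set.univ : Set (DTree prog db.facts a)) fun t => t.weight db.ann

/-- The non-recursive tree provenance semantics `NRT`. -/
noncomputable def NRT [CommSemiring K] (prog : Set (Rule P C)) (db : AnnDB P C K)
    (a : Fact P C) : K :=
  ∑ᶠ (t : DTree prog db.facts a) (_ : t.nonRecursive), t.weight db.ann

/-- The minimal depth tree provenance semantics `MDT`. -/
noncomputable def MDT [CommSemiring K] (prog : Set (Rule P C)) (db : AnnDB P C K)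
    (a : Fact P C) : K :=
  ∑ᶠ (t : DTree prog db.facts a) (_ : t.minimalDepth), t.weight db.ann

/-- The hereditary minimal depth tree provenance semantics `HMDT`. -/
noncomputable def HMDT [CommSemiring K] (prog : Set (Rule P C)) (db : AnnDB P C K)
    (a : Fact P C) : K :=
  ∑ᶠ (t : DTree prog db.facts a) (_ : t.hereditaryMinimal), t.weight db.ann

/-- `σ'` agrees with `σ` on the head variables of `r` (i.e. `h'(x⃗) = h(x⃗)`). -/
def headAgree (r : Rule P C) (σ σ' : Fin r.nvars → C) : Prop :=
  ∀ v : Fin r.nvars, Term.var v ∈ r.head.args → σ' v = σ v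

/-- A `K`-annotated interpretation `(I,μ)` is a model of `Σ` and `(D,K,λ)`. -/
def IsAnnModel [CommSemiring K] [PartialOrder K] (prog : Set (Rule P C)) (db : AnnDB P C K)
    (I : Set (Fact P C)) (μ : Fact P C → K) : Prop :=
  db.facts ⊆ I ∧ (∀ a ∈ db.facts, db.ann a ≤ μ a) ∧
  ∀ r ∈ prog, ∀ σ : Fin r.nvars → C, (∀ i, (r.body i).subst σ ∈ I) →
    r.head.subst σ ∈ I ∧
    setSum {σ' : Fin r.nvars → C | (∀ i, (r.body i).subst σ' ∈ I) ∧ headAgree r σ σ'}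
        (fun σ' => ∏ i : Fin r.nbody, μ ((r.body i).subst σ'))
      ≤ μ (r.head.subst σ)

/-- The annotated model-based provenance semantics `AM`: the greatest lower bound, over all
annotated models, of the annotation of `a` (and `0` if `a` is not entailed). -/
noncomputable def AM [CommSemiring K] [PartialOrder K] (prog : Set (Rule P C))
    (db : AnnDB P C K) (a : Fact P C) : K :=
  if Entails prog db.facts a then
    setInf { x | ∃ I μ, IsAnnModel prog db I μ ∧ μ a = x }
  else 0

/-- A `K`-set-annotated interpretation `(I,μ)` is a model of `Σ` and `(D,K,λ)`. -/
def IsSetAnnModel [CommSemiring K] (prog : Set (Rule P C)) (db : AnnDB P C K)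
    (I : Set (Fact P C)) (μ : Fact P C → Set K) : Prop :=
  db.facts ⊆ I ∧ (∀ a ∈ db.facts, db.ann a ∈ μ a) ∧
  ∀ r ∈ prog, ∀ σ : Fin r.nvars → C, (∀ i, (r.body i).subst σ ∈ I) →
    r.head.subst σ ∈ I ∧
    ∀ g : Fin r.nbody → K, (∀ i, g i ∈ μ ((r.body i).subst σ)) →
      (∏ i, g i) ∈ μ (r.head.subst σ)

/-- The set-annotated model-based provenance semantics `SAM`: the sum of the elements of the
intersection, over all set-annotated models, of the annotation set of `a`. -/
noncomputable def SAM [CommSemiring K] [PartialOrder K] (prog : Set (Rule P C))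
    (db : AnnDB P C K) (a : Fact P C) : K :=
  setSum { k : K | ∀ I μ, IsSetAnnModel prog db I μ → k ∈ μ a } id

/-- The schema of a program: the predicates occurring in its rules. -/
def progSchema (prog : Set (Rule P C)) : Set P :=
  { p | ∃ r ∈ prog, r.head.pred = p ∨ ∃ i, (r.body i).pred = p }

/-- The schema of a database: the predicates occurring in its facts. -/
def dbSchema (D : Set (Fact P C)) : Set P := { p | ∃ a ∈ D, a.pred = p }

/-- The domain of a database: the constants occurring in its facts. -/
def dbConsts (D : Set (Fact P C)) : Set C := { c | ∃ a ∈ D, c ∈ a.args }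

/-- A ground rule built from a list of facts (the body) and a fact (the head). -/
def factRule (body : List (Fact P C)) (head : Fact P C) : Rule P C where
  nvars := 0
  nbody := body.length
  body := fun i => (body.get i).toRuleAtom 0
  head := head.toRuleAtom 0
  vars_in_body := fun v => v.elim0

/-- A ground instance of a rule. -/
def Rule.ground (r : Rule P C) (σ : Fin r.nvars → C) : Rule P C where
  nvars := 0
  nbody := r.nbody
  body := fun i => ((r.body i).subst σ).toRuleAtom 0
  head := (r.head.subst σ).toRuleAtom 0
  vars_in_body := fun v => v.elim0

/-- The grounding `Σ_D` of a program w.r.t. the domain of a database. -/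
def grounding (prog : Set (Rule P C)) (D : Set (Fact P C)) : Set (Rule P C) :=
  { r' | ∃ r ∈ prog, ∃ σ : Fin r.nvars → C, (∀ v, σ v ∈ dbConsts D) ∧ r' = r.ground σ }

/-- Renaming of predicates in a rule. -/
def Rule.mapPred {Q : Type} (f : P → Q) (r : Rule P C) : Rule Q C where
  nvars := r.nvars
  nbody := r.nbody
  body := fun i => (r.body i).mapPred f
  head := r.head.mapPred f
  vars_in_body := fun v => r.vars_in_body v

/-- An adornment of a rule: exactly one body atom is adorned (sent to the `Sum.inr` copy of
the predicates), the head is adorned or not, all the other atoms keep their predicates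
(`Sum.inl` copy). -/
def adornRule (r : Rule P C) (i : Fin r.nbody) (adornHead : Bool) : Rule (P ⊕ P) C where
  nvars := r.nvars
  nbody := r.nbody
  body := fun j => if j = i then (r.body j).mapPred Sum.inr else (r.body j).mapPred Sum.inl
  head := if adornHead then r.head.mapPred Sum.inr else r.head.mapPred Sum.inl
  vars_in_body := by
    intro v
    obtain ⟨j, hj⟩ := r.vars_in_body v
    refine ⟨j, ?_⟩
    try dsimp only
    split <;> exact hj

/-- The set of adornments of a rule. -/
def adornedRules (r : Rule P C) : Set (Rule (P ⊕ P) C) :=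
  { r' | ∃ (i : Fin r.nbody) (b : Bool), r' = adornRule r i b }

/-! Derivation trees provide models of both kinds. Annotating every derivable fact with `AT`
gives an annotated model: by ω-continuity, the left-hand side of a rule condition is a supremum
of finite sums of weights of pairwise distinct derivation trees of the head. Annotating every
derivable fact with the set of weights of its derivation trees gives a set-annotated model, so
the elements summed in `SAM` are weights of distinct trees of `α`. Since the program and the
database are finite, only finitely many constants occur and the derivation trees of a fact are
countable, which is what makes the infinite sums exist. -/

namespace OmegaCommSemiring

variable [OmegaCommSemiring K]

instance : CanonicallyOrderedAdd K where
  exists_add_of_le h := by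
    obtain ⟨c, rfl⟩ := (OmegaCommSemiring.le_iff_exists_add _ _).mp h
    exact ⟨c, rfl⟩
  le_add_self a b := (OmegaCommSemiring.le_iff_exists_add _ _).mpr ⟨b, add_comm a b⟩
  le_self_add a b := (OmegaCommSemiring.le_iff_exists_add _ _).mpr ⟨b, rfl⟩

instance : IsOrderedRing K := CanonicallyOrderedAdd.toIsOrderedRing

theorem isLUB_range_map₂ {op : K → K → K} (hcomm : ∀ a b, op a b = op b a)
    (hmono : ∀ a, Monotone (op a))
    (hcont : ∀ (f : ℕ → K) (a s : K), Monotone f → IsLUB (Set.range f) s →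
      IsLUB (Set.range fun n => op a (f n)) (op a s))
    {f g : ℕ → K} {s t : K} (hf : Monotone f) (hg : Monotone g)
    (hs : IsLUB (Set.range f) s) (ht : IsLUB (Set.range g) t) :
    IsLUB (Set.range fun n => op (f n) (g n)) (op s t) := by
  have hmono₂ : ∀ {a b c d : K}, a ≤ b → c ≤ d → op a c ≤ op b d := fun {a b c d} hab hcd =>
    (hmono a hcd).trans (by rw [hcomm a d, hcomm b d]; exact hmono d hab)
  refine ⟨?_, fun c hc => ?_⟩
  · rintro _ ⟨n, rfl⟩
    exact hmono₂ (hs.1 ⟨n, rfl⟩) (ht.1 ⟨n, rfl⟩)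
  refine (hcont g s t hg ht).2 ?_
  rintro _ ⟨n, rfl⟩
  show op s (g n) ≤ c
  rw [hcomm]
  refine (hcont f (g n) s hf hs).2 ?_
  rintro _ ⟨m, rfl⟩
  calc op (g n) (f m) ≤ op (g (max n m)) (f (max n m)) :=
        hmono₂ (hg le_sup_left) (hf le_sup_right)
    _ = op (f (max n m)) (g (max n m)) := hcomm _ _
    _ ≤ c := hc ⟨_, rfl⟩

theorem isLUB_range_add {f g : ℕ → K} {s t : K} (hf : Monotone f) (hg : Monotone g)
    (hs : IsLUB (Set.range f) s) (ht : IsLUB (Set.range g) t) :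
    IsLUB (Set.range fun n => f n + g n) (s + t) :=
  isLUB_range_map₂ add_comm (fun _ _ _ h => add_le_add le_rfl h) add_lub hf hg hs ht

theorem isLUB_range_mul {f g : ℕ → K} {s t : K} (hf : Monotone f) (hg : Monotone g)
    (hs : IsLUB (Set.range f) s) (ht : IsLUB (Set.range g) t) :
    IsLUB (Set.range fun n => f n * g n) (s * t) :=
  isLUB_range_map₂ mul_comm (fun _ _ _ h => mul_le_mul' le_rfl h) mul_lub hf hg hs ht

theorem isLUB_range_sum {ι : Type*} (F : Finset ι) {f : ι → ℕ → K} {s : ι → K}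
    (hf : ∀ i ∈ F, Monotone (f i)) (hs : ∀ i ∈ F, IsLUB (Set.range (f i)) (s i)) :
    IsLUB (Set.range fun n => ∑ i ∈ F, f i n) (∑ i ∈ F, s i) := by
  induction F using Finset.cons_induction with
  | empty => simpa only [Finset.sum_empty, Set.range_const] using isLUB_singleton
  | cons a F ha ih =>
    simp only [Finset.forall_mem_cons, Finset.sum_cons] at hf hs ⊢
    exact isLUB_range_add hf.1 (fun m n h => Finset.sum_le_sum fun i hi => hf.2 i hi h) hs.1
      (ih hf.2 hs.2)

theorem isLUB_range_prod {ι : Type*} (F : Finset ι) {f : ι → ℕ → K} {s : ι → K}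
    (hf : ∀ i ∈ F, Monotone (f i)) (hs : ∀ i ∈ F, IsLUB (Set.range (f i)) (s i)) :
    IsLUB (Set.range fun n => ∏ i ∈ F, f i n) (∏ i ∈ F, s i) := by
  induction F using Finset.cons_induction with
  | empty => simpa only [Finset.prod_empty, Set.range_const] using isLUB_singleton
  | cons a F ha ih =>
    simp only [Finset.forall_mem_cons, Finset.prod_cons] at hf hs ⊢
    exact isLUB_range_mul hf.1 (fun m n h => Finset.prod_le_prod' fun i hi => hf.2 i hi h) hs.1
      (ih hf.2 hs.2)

end OmegaCommSemiring

section SetSum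

variable {T : Type} {S : Set T} {f : T → K}

theorem setSum_eq_of_isLUB [AddCommMonoid K] [PartialOrder K] {s : K}
    (h : IsLUB (partialSums S f) s) : setSum S f = s := by
  have hex : ∃ s, IsLUB (partialSums S f) s := ⟨s, h⟩
  rw [setSum, dif_pos hex]
  exact hex.choose_spec.unique h

variable [OmegaCommSemiring K]

theorem setSum_le {c : K} (h : ∀ x ∈ partialSums S f, x ≤ c) : setSum S f ≤ c := by
  unfold setSum
  split_ifs with hex
  · exact hex.choose_spec.2 h
  · exact zero_le

theorem exists_monotone_cofinal_partialSums (hS : S.Countable) :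
    ∃ g : ℕ → K, Monotone g ∧ (∀ n, g n ∈ partialSums S f) ∧
      ∀ x ∈ partialSums S f, ∃ n, x ≤ g n := by
  rcases S.eq_empty_or_nonempty with rfl | hne
  · refine ⟨0, monotone_const, fun _ => ⟨∅, by simp, by simp⟩, ?_⟩
    rintro _ ⟨F, hF, rfl⟩
    rw [Finset.coe_eq_empty.mp (Set.subset_empty_iff.mp hF)]
    exact ⟨0, le_rfl⟩
  obtain ⟨e, rfl⟩ := hS.exists_eq_range hne
  refine ⟨fun n => ∑ t ∈ (Finset.range n).image e, f t, fun m n h => ?_, fun n => ?_, ?_⟩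
  · exact Finset.sum_le_sum_of_subset
      (Finset.image_subset_image (Finset.range_subset_range.mpr h))
  · exact ⟨_, by simp, rfl⟩
  · rintro _ ⟨F, hF, rfl⟩
    rw [← Set.image_univ] at hF
    obtain ⟨F', -, rfl⟩ := Finset.subset_set_image_iff.mp hF
    obtain ⟨n, hn⟩ := F'.exists_nat_subset_range
    exact ⟨n, Finset.sum_le_sum_of_subset (Finset.image_subset_image hn)⟩

theorem isLUB_partialSums_of_cofinal {g : ℕ → K} {s : K} (hmem : ∀ n, g n ∈ partialSums S f)
    (hcof : ∀ x ∈ partialSums S f, ∃ n, x ≤ g n) (hs : IsLUB (Set.range g) s) :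
    IsLUB (partialSums S f) s :=
  ⟨fun x hx => (hcof x hx).elim fun n hn => hn.trans (hs.1 ⟨n, rfl⟩),
    fun _ hb => hs.2 (Set.range_subset_iff.mpr fun n => hb (hmem n))⟩

theorem exists_monotone_isLUB_setSum (hS : S.Countable) :
    ∃ g : ℕ → K, Monotone g ∧ (∀ n, g n ∈ partialSums S f) ∧
      IsLUB (Set.range g) (setSum S f) := by
  obtain ⟨g, hmono, hmem, hcof⟩ := exists_monotone_cofinal_partialSums (f := f) hS
  obtain ⟨s, hs⟩ := OmegaCommSemiring.chain_lub g hmono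
  rw [setSum_eq_of_isLUB (isLUB_partialSums_of_cofinal hmem hcof hs)]
  exact ⟨g, hmono, hmem, hs⟩

theorem le_setSum (hS : S.Countable) {x : K} (hx : x ∈ partialSums S f) : x ≤ setSum S f := by
  obtain ⟨g, hmono, hmem, hcof⟩ := exists_monotone_cofinal_partialSums (f := f) hS
  obtain ⟨s, hs⟩ := OmegaCommSemiring.chain_lub g hmono
  have hsum := isLUB_partialSums_of_cofinal hmem hcof hs
  exact setSum_eq_of_isLUB hsum ▸ hsum.1 hx

theorem sum_prod_setSum_le {J ι : Type*} [Fintype ι] {T : J → ι → Type}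
    [∀ j i, Countable (T j i)] (F : Finset J) (f : ∀ j i, T j i → K) {c : K}
    (h : ∀ G : ∀ j i, Finset (T j i), ∑ j ∈ F, ∏ i, ∑ t ∈ G j i, f j i t ≤ c) :
    ∑ j ∈ F, ∏ i, setSum Set.univ (f j i) ≤ c := by
  choose g hmono hmem hlub using fun j i =>
    exists_monotone_isLUB_setSum (f := f j i) Set.countable_univ
  choose G _ hG using hmem
  refine (OmegaCommSemiring.isLUB_range_sum F
    (fun j _ _ _ h => Finset.prod_le_prod' fun i _ => hmono j i h)
    fun j _ => OmegaCommSemiring.isLUB_range_prod _ (fun i _ => hmono j i)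
      fun i _ => hlub j i).2 ?_
  rintro _ ⟨n, rfl⟩
  simpa only [hG] using h fun j i => G j i n

end SetSum

theorem setInf_le [Zero K] [PartialOrder K] {S : Set K} (h : ∃ z, IsGLB S z) {x : K}
    (hx : x ∈ S) : setInf S ≤ x := by
  rw [setInf, dif_pos h]
  exact h.choose_spec.1 hx

section Trees

variable {prog : Set (Rule P C)} {D : Set (Fact P C)}

/-- The constants that can occur in a fact derivable from `D` by `prog`. -/
def baseConsts (prog : Set (Rule P C)) (D : Set (Fact P C)) : Set C :=
  dbConsts D ∪ ⋃ r ∈ prog, {c | Term.const c ∈ r.head.args}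

theorem baseConsts_finite (hprog : prog.Finite) (hD : D.Finite) :
    (baseConsts prog D).Finite := by
  refine Set.Finite.union ?_ (hprog.biUnion fun r _ => ?_)
  · exact (hD.biUnion fun a _ => a.args.finite_toSet).subset
      fun c ⟨a, ha, hc⟩ => Set.mem_biUnion ha hc
  · exact r.head.args.finite_toSet.preimage fun _ _ _ _ h => Term.const.inj h

theorem DTree.mem_baseConsts {a : Fact P C} (t : DTree prog D a) :
    ∀ c ∈ a.args, c ∈ baseConsts prog D := by
  induction t with
  | leaf a ha => exact fun c hc => Or.inl ⟨a, ha, hc⟩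
  | node r hr σ ch ih =>
    intro c hc
    obtain ⟨tm | v, htm, rfl⟩ := List.mem_map.mp hc
    · exact Or.inr (Set.mem_biUnion hr htm)
    · obtain ⟨i, hi⟩ := r.vars_in_body v
      exact ih i _ (List.mem_map.mpr ⟨_, hi, rfl⟩)

theorem DTree.subst_mem_baseConsts {r : Rule P C} {σ : Fin r.nvars → C}
    (ch : ∀ i, DTree prog D ((r.body i).subst σ)) (v : Fin r.nvars) :
    σ v ∈ baseConsts prog D := by
  obtain ⟨i, hi⟩ := r.vars_in_body v
  exact (ch i).mem_baseConsts _ (List.mem_map.mpr ⟨_, hi, rfl⟩)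

/-- Leaves need no code of their own: their fact is recorded in the type. -/
def DTree.code (eR : Rule P C → ℕ) (eC : C → ℕ) : ∀ {a : Fact P C}, DTree prog D a → ℕ
  | _, .leaf _ _ => 0
  | _, .node r _ σ ch =>
      Encodable.encode (eR r, List.ofFn (eC ∘ σ), List.ofFn fun i => code eR eC (ch i)) + 1

theorem DTree.heq_of_code_eq {eR : Rule P C → ℕ} {eC : C → ℕ} (hR : Set.InjOn eR prog)
    (hC : Set.InjOn eC (baseConsts prog D)) {a₁ : Fact P C} (t₁ : DTree prog D a₁) :
    ∀ {a₂ : Fact P C} (t₂ : DTree prog D a₂), a₁ = a₂ → t₁.code eR eC = t₂.code eR eC →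
      HEq t₁ t₂ := by
  induction t₁ with
  | leaf a ha =>
    rintro _ (⟨_, _⟩ | ⟨_, _, _, _⟩) rfl h
    · rfl
    · exact absurd h.symm (Nat.succ_ne_zero _)
  | node r hr σ ch ih =>
    rintro _ (⟨_, _⟩ | ⟨r', hr', σ', ch'⟩) he h
    · exact absurd h (Nat.succ_ne_zero _)
    simp only [DTree.code, Nat.succ_inj, Encodable.encode_inj, Prod.mk.injEq] at h
    obtain ⟨hrr, hσ, hch⟩ := h
    obtain rfl := hR hr hr' hrr
    obtain rfl : σ = σ' := funext fun v => hC (DTree.subst_mem_baseConsts ch v)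
      (DTree.subst_mem_baseConsts ch' v) (congrFun (List.ofFn_inj.mp hσ) v)
    obtain rfl : ch = ch' :=
      funext fun i => eq_of_heq (ih i (ch' i) rfl (congrFun (List.ofFn_inj.mp hch) i))
    rfl

theorem DTree.countable (hprog : prog.Finite) (hD : D.Finite) (a : Fact P C) :
    Countable (DTree prog D a) := by
  obtain ⟨eR, hR⟩ := Set.countable_iff_exists_injOn.mp hprog.countable
  obtain ⟨eC, hC⟩ := Set.countable_iff_exists_injOn.mp (baseConsts_finite hprog hD).countable
  exact Function.Injective.countable (f := DTree.code eR eC)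
    fun t₁ t₂ h => eq_of_heq (DTree.heq_of_code_eq hR hC t₁ t₂ rfl h)

theorem headAgree.subst_eq {r : Rule P C} {σ σ' : Fin r.nvars → C} (h : headAgree r σ σ') :
    r.head.subst σ' = r.head.subst σ := by
  simp only [Atom.subst, Atom.mk.injEq, true_and]
  refine List.map_congr_left fun tm htm => ?_
  cases tm with
  | const c => rfl
  | var v => exact h v htm

def DTree.castNode {r : Rule P C} (hr : r ∈ prog) {a : Fact P C}
    (p : (σ : Fin r.nvars → C) × ∀ i, DTree prog D ((r.body i).subst σ))
    (h : r.head.subst p.1 = a) : DTree prog D a :=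
  h ▸ .node r hr p.1 p.2

def DTree.rootData : ∀ {a : Fact P C}, DTree prog D a →
    Option ((r : Rule P C) × (σ : Fin r.nvars → C) × ∀ i, DTree prog D ((r.body i).subst σ))
  | _, .leaf _ _ => none
  | _, .node r _ σ ch => some ⟨r, σ, ch⟩

theorem DTree.rootData_castNode {r : Rule P C} (hr : r ∈ prog) {a : Fact P C}
    (p : (σ : Fin r.nvars → C) × ∀ i, DTree prog D ((r.body i).subst σ))
    (h : r.head.subst p.1 = a) : (DTree.castNode hr p h).rootData = some ⟨r, p⟩ := by
  obtain ⟨σ, ch⟩ := p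
  subst h
  rfl

theorem DTree.castNode_inj {r : Rule P C} (hr : r ∈ prog) {a : Fact P C}
    {p q : (σ : Fin r.nvars → C) × ∀ i, DTree prog D ((r.body i).subst σ)}
    {hp : r.head.subst p.1 = a} {hq : r.head.subst q.1 = a}
    (h : DTree.castNode hr p hp = DTree.castNode hr q hq) : p = q := by
  have := congrArg DTree.rootData h
  rw [DTree.rootData_castNode, DTree.rootData_castNode] at this
  exact eq_of_heq (Sigma.mk.inj (Option.some.inj this)).2

theorem DTree.weight_castNode [CommSemiring K] (lam : Fact P C → K) {r : Rule P C}
    (hr : r ∈ prog) {a : Fact P C}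
    (p : (σ : Fin r.nvars → C) × ∀ i, DTree prog D ((r.body i).subst σ))
    (h : r.head.subst p.1 = a) :
    (DTree.castNode hr p h).weight lam = ∏ i, (p.2 i).weight lam := by
  obtain ⟨σ, ch⟩ := p
  subst h
  rfl

end Trees

section Models

variable [OmegaCommSemiring K] {prog : Set (Rule P C)} {db : AnnDB P C K}

theorem sum_weight_le_AT (hprog : prog.Finite) (hfin : db.facts.Finite) {a : Fact P C}
    {ι : Type*} [Fintype ι] {ψ : ι → DTree prog db.facts a} (hψ : Function.Injective ψ) :
    ∑ i, (ψ i).weight db.ann ≤ AT prog db a := by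
  have := DTree.countable hprog hfin a
  rw [← Finset.sum_image hψ.injOn]
  exact le_setSum Set.countable_univ ⟨_, Set.subset_univ _, rfl⟩

/-- Distributing the product over the sums turns each summand into the weight of a
derivation tree of the head, with root rule `r`; distinct summands give distinct trees. -/
theorem sum_prod_sum_weight_le_AT (hprog : prog.Finite) (hfin : db.facts.Finite)
    {r : Rule P C} (hr : r ∈ prog) (σ : Fin r.nvars → C) (F : Finset (Fin r.nvars → C))
    (hF : ∀ σ' ∈ F, headAgree r σ σ')
    (G : ∀ σ' i, Finset (DTree prog db.facts ((r.body i).subst σ'))) :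
    ∑ σ' ∈ F, ∏ i, ∑ t ∈ G σ' i, t.weight db.ann ≤ AT prog db (r.head.subst σ) := by
  set B := F.sigma fun σ' => Fintype.piFinset (G σ')
  have hhead (p : B) : r.head.subst p.1.1 = r.head.subst σ :=
    (hF _ (Finset.mem_sigma.mp p.2).1).subst_eq
  calc ∑ σ' ∈ F, ∏ i, ∑ t ∈ G σ' i, t.weight db.ann
      = ∑ p ∈ B, ∏ i, (p.2 i).weight db.ann := by
        simp only [B, Finset.sum_sigma, Finset.prod_univ_sum]
    _ = ∑ p : B, (DTree.castNode hr p.1 (hhead p)).weight db.ann := by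
        rw [← Finset.sum_coe_sort B]
        simp only [DTree.weight_castNode]
    _ ≤ AT prog db (r.head.subst σ) :=
        sum_weight_le_AT hprog hfin fun _ _ h => Subtype.ext (DTree.castNode_inj hr h)

theorem isAnnModel_AT (hprog : prog.Finite) (hfin : db.facts.Finite) :
    IsAnnModel prog db {a | Nonempty (DTree prog db.facts a)} (AT prog db) := by
  have := DTree.countable hprog hfin
  refine ⟨fun a ha => ⟨.leaf a ha⟩, fun a ha => ?_, fun r hr σ hbody =>
    ⟨⟨.node r hr σ fun i => (hbody i).some⟩, setSum_le ?_⟩⟩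
  · simpa [DTree.weight] using
      sum_weight_le_AT hprog hfin (ψ := fun _ : Unit => DTree.leaf a ha) fun _ _ _ => rfl
  · rintro _ ⟨F, hF, rfl⟩
    exact sum_prod_setSum_le F _ fun G =>
      sum_prod_sum_weight_le_AT hprog hfin hr σ F (fun σ' h => (hF h).2) G

theorem isSetAnnModel_weights (db : AnnDB P C K) :
    IsSetAnnModel prog db {a | Nonempty (DTree prog db.facts a)}
      fun a => Set.range fun t : DTree prog db.facts a => t.weight db.ann := by
  refine ⟨fun a ha => ⟨.leaf a ha⟩, fun a ha => ⟨.leaf a ha, rfl⟩, fun r hr σ hbody =>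
    ⟨⟨.node r hr σ fun i => (hbody i).some⟩, fun g hg => ?_⟩⟩
  choose t ht using hg
  exact ⟨.node r hr σ t, Finset.prod_congr rfl fun i _ => ht i⟩

theorem AM_le_AT (hprog : prog.Finite) (hfin : db.facts.Finite)
    (hglb : ∀ S : Set K, ∃ z, IsGLB S z) (α : Fact P C) : AM prog db α ≤ AT prog db α := by
  unfold AM
  split_ifs
  · exact setInf_le (hglb _) ⟨_, _, isAnnModel_AT hprog hfin, rfl⟩
  · exact zero_le

theorem SAM_le_AT (hprog : prog.Finite) (hfin : db.facts.Finite) (α : Fact P C) :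
    SAM prog db α ≤ AT prog db α := by
  refine setSum_le ?_
  rintro _ ⟨F, hF, rfl⟩
  choose ψ hψ using fun k : F => hF k.2 _ _ (isSetAnnModel_weights db)
  calc ∑ k ∈ F, id k = ∑ k : F, (ψ k).weight db.ann := by
        rw [← Finset.sum_coe_sort F]
        simp only [hψ, id]
    _ ≤ AT prog db α :=
        sum_weight_le_AT hprog hfin fun k l h => Subtype.ext ((hψ k).symm.trans (h ▸ hψ l))

end Models

theorem statement_0_general (P C K : Type) [OmegaCommSemiring K]
    (prog : Set (Rule P C)) (hprog : prog.Finite)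
    (db : AnnDB P C K) (hfin : db.facts.Finite)
    (α : Fact P C) :
    ((∀ S : Set K, ∃ z, IsGLB S z) → AM prog db α ≤ AT prog db α)
      ∧ SAM prog db α ≤ AT prog db α :=
  ⟨fun hglb => AM_le_AT hprog hfin hglb α, SAM_le_AT hprog hfin α⟩

/-- `AM ⊑ AT` and `SAM ⊑ AT`. -/
theorem statement_0 (P C K : Type) [OmegaCommSemiring K]
    (prog : Set (Rule P C)) (hprog : prog.Finite)
    (db : AnnDB P C K) (hfin : db.facts.Finite)
    (hann : ∀ a ∈ db.facts, db.ann a ≠ 0) (α : Fact P C) :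
    ((∀ S : Set K, ∃ z, IsGLB S z) → AM prog db α ≤ AT prog db α)
      ∧ SAM prog db α ≤ AT prog db α :=
  statement_0_general P C K prog hprog db hfin α

end Datalog
end

section
/- For every Datalog program Σ, annotated database (D,K,λ), and fact α such that Σ,D ⊨ α, the optimized naive evaluation sequence stabilizes: there exists k ≥ 0 such that I_{o,α}^ℓ(Σ,D,K,λ) = I_{o,α}^k(Σ,D,K,λ) for every ℓ ≥ k. -/
attribute [local instance] Classical.propDecidable

namespace Datalog

variable {P C K : Type}

lemma derivable_mono {prog : Set (Rule P C)} {I J : Set (Fact P C)} (h : I ⊆ J) :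
    derivable prog I ⊆ derivable prog J := by
  rintro a ⟨r, hr, σ, hbody, rfl⟩
  exact ⟨r, hr, σ, fun i => h (hbody i), rfl⟩

/-- Rule bodies are finite, so a body matched in the union of a chain is matched at one stage. -/
lemma closedUnder_iUnion {prog : Set (Rule P C)} {I : ℕ → Set (Fact P C)} (hmono : Monotone I)
    (hstep : ∀ n, derivable prog (I n) ⊆ I (n + 1)) : ClosedUnder prog (⋃ n, I n) := by
  intro r hr σ hbody
  choose stage hstage using fun i => Set.mem_iUnion.mp (hbody i)
  set N := Finset.univ.sup stage
  have hbodyN : ∀ i, (r.body i).subst σ ∈ I N :=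
    fun i => hmono (Finset.le_sup (Finset.mem_univ i)) (hstage i)
  exact Set.mem_iUnion.mpr ⟨N + 1, hstep N ⟨r, hr, σ, hbodyN, rfl⟩⟩

section Sequences

variable [CommSemiring K] {prog : Set (Rule P C)} {db : AnnDB P C K}

lemma naiveSeq_facts_monotone : Monotone fun i => (naiveSeq prog db i).facts := by
  refine monotone_nat_of_le_succ fun i => ?_
  induction i with
  | zero => exact Set.subset_union_right
  | succ i ih => exact Set.union_subset_union_left _ (derivable_mono ih)

lemma exists_mem_naiveSeq_facts {a : Fact P C} (hent : Entails prog db.facts a) :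
    ∃ i, a ∈ (naiveSeq prog db i).facts := by
  refine Set.mem_iUnion.mp (hent _ (Set.subset_iUnion (fun i => (naiveSeq prog db i).facts) 0) ?_)
  exact closedUnder_iUnion naiveSeq_facts_monotone fun _ => Set.subset_union_left

lemma optSeq_eq_naiveSeq {target : Fact P C}
    (h : ∀ i, target ∉ (optSeq prog db target i).facts) (i : ℕ) :
    optSeq prog db target i = naiveSeq prog db i := by
  induction i with
  | zero => rfl
  | succ i ih => rw [optSeq, if_neg (h i), ih, naiveSeq]

lemma optSeq_eq_of_mem {target : Fact P C} {k ℓ : ℕ}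
    (hk : target ∈ (optSeq prog db target k).facts) (hkℓ : k ≤ ℓ) :
    optSeq prog db target ℓ = optSeq prog db target k := by
  induction ℓ, hkℓ using Nat.le_induction with
  | base => rfl
  | succ ℓ _ ih => rw [optSeq, ih, if_pos hk]

end Sequences

theorem statement_5_general (P C K : Type) [CommSemiring K]
    (prog : Set (Rule P C))
    (db : AnnDB P C K) (α : Fact P C)
    (hent : Entails prog db.facts α) :
    ∃ k : ℕ, ∀ ℓ, k ≤ ℓ → optSeq prog db α ℓ = optSeq prog db α k := by
  obtain ⟨k, hk⟩ : ∃ k, α ∈ (optSeq prog db α k).facts := by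
    by_contra! hnever
    obtain ⟨i, hi⟩ := exists_mem_naiveSeq_facts hent
    exact hnever i (optSeq_eq_naiveSeq hnever i ▸ hi)
  exact ⟨k, fun ℓ hkℓ => optSeq_eq_of_mem hk hkℓ⟩

/-- if `Σ, D ⊨ α` then the optimized naive evaluation sequence stabilizes. -/
theorem statement_5 (P C K : Type) [CommSemiring K]
    (prog : Set (Rule P C)) (hprog : prog.Finite)
    (db : AnnDB P C K) (hfin : db.facts.Finite)
    (hann : ∀ a ∈ db.facts, db.ann a ≠ 0) (α : Fact P C)
    (hent : Entails prog db.facts α) :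
    ∃ k : ℕ, ∀ ℓ, k ≤ ℓ → optSeq prog db α ℓ = optSeq prog db α k :=
  statement_5_general P C K prog db α hent

end Datalog
end

section
/- The optimized execution provenance semantics equals the minimal-depth-tree semantics: for every Datalog program Σ, annotated database (D,K,λ) over a commutative semiring K, and fact α, OE(Σ,D,K,λ,α) = MDT(Σ,D,K,λ,α). -/
attribute [local instance] Classical.propDecidable

namespace Datalog

variable {P C K : Type}

/-! Unfolding `T_Σ`, the `i`-th stage of the naive sequence annotates every fact with the sum
of the weights of its derivation trees of depth at most `i`: a tree of depth at most `i + 1` is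
a leaf or a rule application to trees of depth at most `i`, and distributivity turns the
product over the body atoms of these sums into a sum over tuples of subtrees. Finiteness of
`Σ` and `D` makes all these sets of trees finite, which matters since `∑ᶠ` is `0` on infinite
supports. The optimized sequence coincides with the naive one up to the first stage `d`
containing `α`, which is the minimal depth of a derivation tree of `α`, and is constant from
then on. -/

theorem _root_.finsum_mem_pi_prod {ι M : Type*} [Fintype ι] [CommSemiring M] {κ : ι → Type*}
    {t : ∀ i, Set (κ i)} (ht : ∀ i, (t i).Finite) (f : ∀ i, κ i → M) :
    ∑ᶠ g ∈ {g : ∀ i, κ i | ∀ i, g i ∈ t i}, ∏ i, f i (g i) = ∏ i, ∑ᶠ b ∈ t i, f i b := by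
  classical
  have hpi : {g : ∀ i, κ i | ∀ i, g i ∈ t i} =
      ↑(Fintype.piFinset fun i => (ht i).toFinset) := by
    ext g
    simp
  rw [hpi, finsum_mem_coe_finset, ← Finset.prod_univ_sum]
  simp_rw [finsum_mem_eq_finite_toFinset_sum _ (ht _)]

/-- The index set of the sum `ruleSum prog I lam a`. -/
def derivations (prog : Set (Rule P C)) (I : Set (Fact P C)) (a : Fact P C) :
    Set ((r : Rule P C) × (Fin r.nvars → C)) :=
  {p | p.1 ∈ prog ∧ (∀ i, (p.1.body i).subst p.2 ∈ I) ∧ p.1.head.subst p.2 = a}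

section Finiteness

variable {prog : Set (Rule P C)} {I : Set (Fact P C)}

theorem finite_setOf_body_mem (hprog : prog.Finite) (hI : I.Finite) :
    {p : (r : Rule P C) × (Fin r.nvars → C) |
      p.1 ∈ prog ∧ ∀ i, (p.1.body i).subst p.2 ∈ I}.Finite := by
  set S : Set C := ⋃ a ∈ I, {c | c ∈ a.args}
  have hS : S.Finite := hI.biUnion fun a _ => a.args.finite_toSet
  refine (hprog.biUnion fun r _ => (Set.Finite.pi' fun _ => hS).image (Sigma.mk r)).subset ?_
  rintro ⟨r, σ⟩ ⟨hr, hbody⟩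
  simp only [Set.mem_iUnion]
  refine ⟨r, hr, σ, fun v => ?_, rfl⟩
  obtain ⟨i, hi⟩ := r.vars_in_body v
  exact Set.mem_biUnion (hbody i)
    (show σ v ∈ ((r.body i).subst σ).args from List.mem_map_of_mem hi)

theorem derivations_finite (hprog : prog.Finite) (hI : I.Finite) (a : Fact P C) :
    (derivations prog I a).Finite :=
  (finite_setOf_body_mem hprog hI).subset fun _ hp => ⟨hp.1, hp.2.1⟩

theorem derivable_finite (hprog : prog.Finite) (hI : I.Finite) : (derivable prog I).Finite := by
  refine ((finite_setOf_body_mem hprog hI).image fun p => p.1.head.subst p.2).subset ?_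
  rintro a ⟨r, hr, σ, hbody, rfl⟩
  exact ⟨⟨r, σ⟩, ⟨hr, hbody⟩, rfl⟩

end Finiteness

namespace DTree

variable {prog : Set (Rule P C)} {D : Set (Fact P C)}

def root : ∀ {a : Fact P C}, DTree prog D a → Option ((r : Rule P C) × (Fin r.nvars → C))
  | _, .leaf _ _ => none
  | _, .node r _ σ _ => some ⟨r, σ⟩

theorem depth_node_le_succ_iff {r : Rule P C} (hr : r ∈ prog) (σ : Fin r.nvars → C)
    (ch : ∀ j, DTree prog D ((r.body j).subst σ)) (i : ℕ) :
    (node r hr σ ch).depth ≤ i + 1 ↔ ∀ j, (ch j).depth ≤ i := by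
  simp [depth, Finset.sup_le_iff]

theorem setOf_depth_le_zero (a : Fact P C) :
    {t : DTree prog D a | t.depth ≤ 0} = {t | t.root = none} := by
  ext t
  cases t <;> simp [depth, root]

theorem setOf_root_eq_none_subsingleton (a : Fact P C) :
    {t : DTree prog D a | t.root = none}.Subsingleton := by
  intro t ht t' ht'
  cases t with
  | node => simp [root] at ht
  | leaf =>
    cases t' with
    | leaf => rfl
    | node => simp [root] at ht'

theorem finsum_weight_root_eq_none [CommSemiring K] (db : AnnDB P C K) (a : Fact P C) :
    ∑ᶠ t ∈ {t : DTree prog db.facts a | t.root = none}, t.weight db.ann = db.ann a := by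
  by_cases ha : a ∈ db.facts
  · have hleaf : {t : DTree prog db.facts a | t.root = none} = {leaf a ha} := by
      ext t
      cases t <;> simp [root]
    rw [hleaf, finsum_mem_singleton, weight]
  · have hempty : {t : DTree prog db.facts a | t.root = none} = ∅ := by
      ext t
      cases t <;> simp_all [root]
    rw [hempty, finsum_mem_empty, db.ann_eq_zero a ha]

theorem eq_node_of_root_eq_some {r : Rule P C} {σ : Fin r.nvars → C} :
    ∀ {a : Fact P C} (t : DTree prog D a), t.root = some ⟨r, σ⟩ →
      ∃ (hr : r ∈ prog) (ch : ∀ j, DTree prog D ((r.body j).subst σ)), HEq t (node r hr σ ch)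
  | _, .leaf _ _, h => by simp [root] at h
  | _, .node r' hr' σ' ch', h => by
    obtain ⟨rfl, rfl⟩ := Sigma.mk.inj_iff.1 (Option.some.inj h)
    exact ⟨hr', ch', HEq.rfl⟩

theorem setOf_root_eq_some_eq_image {r : Rule P C} (hr : r ∈ prog) (σ : Fin r.nvars → C)
    (i : ℕ) :
    {t : DTree prog D (r.head.subst σ) | t.depth ≤ i + 1 ∧ t.root = some ⟨r, σ⟩} =
      node r hr σ '' {ch | ∀ j, (ch j).depth ≤ i} := by
  ext t
  constructor
  · rintro ⟨hdepth, hroot⟩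
    obtain ⟨_, ch, hch⟩ := eq_node_of_root_eq_some t hroot
    obtain rfl := eq_of_heq hch
    exact ⟨ch, (depth_node_le_succ_iff hr σ ch i).1 hdepth, rfl⟩
  · rintro ⟨ch, hch, rfl⟩
    exact ⟨(depth_node_le_succ_iff hr σ ch i).2 hch, rfl⟩

theorem setOf_depth_le_succ (i : ℕ) (a : Fact P C) :
    {t : DTree prog D a | t.depth ≤ i + 1} =
      {t | t.root = none} ∪
        ⋃ p ∈ derivations prog {b | ∃ t : DTree prog D b, t.depth ≤ i} a,
          {t | t.depth ≤ i + 1 ∧ t.root = some p} := by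
  ext t
  cases t with
  | leaf b hb => simp [depth, root]
  | node r hr σ ch =>
    simp only [Set.mem_ofPred_eq, Set.mem_union, Set.mem_iUnion, root, reduceCtorEq, false_or,
      Option.some.injEq, exists_prop]
    constructor
    · intro hdepth
      have hch := (depth_node_le_succ_iff hr σ ch i).1 hdepth
      exact ⟨⟨r, σ⟩, ⟨hr, fun j => ⟨ch j, hch j⟩, rfl⟩, hdepth, rfl⟩
    · rintro ⟨-, -, hdepth, -⟩
      exact hdepth

theorem finsum_setOf_depth_le_succ {M : Type*} [AddCommMonoid M] {i : ℕ} {a : Fact P C}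
    (hfin : {t : DTree prog D a | t.depth ≤ i + 1}.Finite)
    (hder : (derivations prog {b | ∃ t : DTree prog D b, t.depth ≤ i} a).Finite)
    (f : DTree prog D a → M) :
    ∑ᶠ t ∈ {t : DTree prog D a | t.depth ≤ i + 1}, f t =
      ∑ᶠ t ∈ {t : DTree prog D a | t.root = none}, f t +
        ∑ᶠ p ∈ derivations prog {b | ∃ t : DTree prog D b, t.depth ≤ i} a,
          ∑ᶠ t ∈ {t : DTree prog D a | t.depth ≤ i + 1 ∧ t.root = some p}, f t := by
  set fiber := fun p => {t : DTree prog D a | t.depth ≤ i + 1 ∧ t.root = some p}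
  rw [setOf_depth_le_succ] at hfin ⊢
  have hnodes := hfin.subset Set.subset_union_right
  have hdisj : Disjoint {t : DTree prog D a | t.root = none}
      (⋃ p ∈ derivations prog {b | ∃ t : DTree prog D b, t.depth ≤ i} a, fiber p) := by
    refine Set.disjoint_left.2 fun t hnone hsome => ?_
    simp only [Set.mem_iUnion] at hsome
    obtain ⟨p, -, -, hp⟩ := hsome
    exact Option.some_ne_none p (hp.symm.trans hnone)
  have hpairwise : (derivations prog {b | ∃ t : DTree prog D b, t.depth ≤ i} a).PairwiseDisjoint
      fiber := fun p _ q _ hpq => Set.disjoint_left.2 fun t hp hq =>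
    hpq (Option.some.inj (hp.2.symm.trans hq.2))
  rw [finsum_mem_union hdisj (hfin.subset Set.subset_union_left) hnodes,
    finsum_mem_biUnion hpairwise hder fun p hp => hnodes.subset (Set.subset_biUnion_of_mem hp)]

theorem finsum_weight_root_eq_some [CommSemiring K] (lam : Fact P C → K) {r : Rule P C}
    (hr : r ∈ prog) (σ : Fin r.nvars → C) {i : ℕ}
    (hfin : ∀ j, {t : DTree prog D ((r.body j).subst σ) | t.depth ≤ i}.Finite) :
    ∑ᶠ t ∈ {t : DTree prog D (r.head.subst σ) | t.depth ≤ i + 1 ∧ t.root = some ⟨r, σ⟩},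
        t.weight lam =
      ∏ j, ∑ᶠ t ∈ {t : DTree prog D ((r.body j).subst σ) | t.depth ≤ i}, t.weight lam := by
  rw [setOf_root_eq_some_eq_image hr σ i, finsum_mem_image fun _ _ _ _ h => by injection h]
  exact finsum_mem_pi_prod hfin _

theorem minimalDepth_iff {a : Fact P C} {t₀ t : DTree prog D a} (ht₀ : t₀.minimalDepth) :
    t.minimalDepth ↔ t.depth ≤ t₀.depth :=
  ⟨fun ht => ht t₀, fun ht t' => ht.trans (ht₀ t')⟩

end DTree

section NaiveSeq

variable [CommSemiring K] {prog : Set (Rule P C)} {db : AnnDB P C K}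

theorem naiveSeq_facts_finite (hprog : prog.Finite) (hfin : db.facts.Finite) (i : ℕ) :
    (naiveSeq prog db i).facts.Finite := by
  induction i with
  | zero => exact hfin
  | succ i ih => exact (derivable_finite hprog ih).union hfin

theorem naiveSeq_facts (i : ℕ) :
    (naiveSeq prog db i).facts = {a | ∃ t : DTree prog db.facts a, t.depth ≤ i} := by
  induction i with
  | zero =>
    ext a
    refine ⟨fun ha => ⟨.leaf a ha, le_rfl⟩, fun ⟨t, ht⟩ => ?_⟩
    cases t with
    | leaf => assumption
    | node => simp [DTree.depth] at ht
  | succ i ih =>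
    ext a
    change a ∈ derivable prog (naiveSeq prog db i).facts ∪ db.facts ↔ _
    rw [ih]
    constructor
    · rintro (⟨r, hr, σ, hbody, rfl⟩ | ha)
      · choose ch hch using hbody
        exact ⟨.node r hr σ ch, (DTree.depth_node_le_succ_iff hr σ ch i).2 hch⟩
      · exact ⟨.leaf a ha, Nat.zero_le _⟩
    · rintro ⟨t, ht⟩
      cases t with
      | leaf b hb => exact Or.inr hb
      | node r hr σ ch =>
        have hch := (DTree.depth_node_le_succ_iff hr σ ch i).1 ht
        exact Or.inl ⟨r, hr, σ, fun j => ⟨ch j, hch j⟩, rfl⟩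

theorem Tcons_ann (I : AnnDB P C K) (a : Fact P C) :
    (Tcons prog I).ann a = ruleSum prog I.facts I.ann a := by
  by_cases ha : a ∈ derivable prog I.facts
  · exact if_pos ha
  · have hempty : derivations prog I.facts a = ∅ :=
      Set.eq_empty_of_forall_notMem fun p ⟨hr, hbody, hhead⟩ => ha ⟨p.1, hr, p.2, hbody, hhead⟩
    change ite _ _ _ = ∑ᶠ p ∈ derivations prog I.facts a, ∏ i, I.ann ((p.1.body i).subst p.2)
    rw [if_neg ha, hempty, finsum_mem_empty]

theorem finite_setOf_depth_le (hprog : prog.Finite) (hfin : db.facts.Finite) (i : ℕ)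
    (a : Fact P C) : {t : DTree prog db.facts a | t.depth ≤ i}.Finite := by
  induction i generalizing a with
  | zero =>
    rw [DTree.setOf_depth_le_zero]
    exact (DTree.setOf_root_eq_none_subsingleton a).finite
  | succ i ih =>
    rw [DTree.setOf_depth_le_succ, ← naiveSeq_facts]
    refine (DTree.setOf_root_eq_none_subsingleton a).finite.union
      ((derivations_finite hprog (naiveSeq_facts_finite hprog hfin i) a).biUnion ?_)
    rintro ⟨r, σ⟩ ⟨hr, -, rfl⟩
    rw [DTree.setOf_root_eq_some_eq_image hr σ i]
    exact (Set.Finite.pi' fun j => ih _).image _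

theorem naiveSeq_ann (hprog : prog.Finite) (hfin : db.facts.Finite) (i : ℕ) (a : Fact P C) :
    (naiveSeq prog db i).ann a =
      ∑ᶠ t ∈ {t : DTree prog db.facts a | t.depth ≤ i}, t.weight db.ann := by
  induction i generalizing a with
  | zero =>
    rw [DTree.setOf_depth_le_zero, DTree.finsum_weight_root_eq_none]
    rfl
  | succ i ih =>
    have hder : (derivations prog {b | ∃ t : DTree prog db.facts b, t.depth ≤ i} a).Finite := by
      rw [← naiveSeq_facts]
      exact derivations_finite hprog (naiveSeq_facts_finite hprog hfin i) a
    rw [DTree.finsum_setOf_depth_le_succ (finite_setOf_depth_le hprog hfin (i + 1) a) hder,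
      DTree.finsum_weight_root_eq_none, ← naiveSeq_facts]
    change (Tcons prog (naiveSeq prog db i)).ann a + db.ann a = _
    rw [Tcons_ann, add_comm]
    congr 1
    refine finsum_mem_congr rfl ?_
    rintro ⟨r, σ⟩ ⟨hr, -, rfl⟩
    rw [DTree.finsum_weight_root_eq_some _ hr σ fun j => finite_setOf_depth_le hprog hfin i _]
    simp only [ih]

end NaiveSeq

section OptSeq

variable [CommSemiring K] {prog : Set (Rule P C)} {db : AnnDB P C K} {α : Fact P C}

theorem optSeq_eq_naiveSeq_s6 {j : ℕ} (hj : ∀ m < j, α ∉ (naiveSeq prog db m).facts) {i : ℕ}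
    (hij : i ≤ j) : optSeq prog db α i = naiveSeq prog db i := by
  induction i with
  | zero => rfl
  | succ i ih =>
    rw [optSeq, ih (by omega), if_neg (hj i (by omega))]
    rfl

theorem optSeq_eq_of_mem_s6 {j : ℕ} (hj : α ∈ (optSeq prog db α j).facts) {ℓ : ℕ} (hjℓ : j ≤ ℓ) :
    optSeq prog db α ℓ = optSeq prog db α j := by
  induction ℓ, hjℓ using Nat.le_induction with
  | base => rfl
  | succ ℓ _ ih => rw [optSeq, ih, if_pos hj]

theorem OE_eq_of_forall_optSeq_eq {k : ℕ}
    (hk : ∀ ℓ, k ≤ ℓ → optSeq prog db α ℓ = optSeq prog db α k) :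
    OE prog db α = (optSeq prog db α k).ann α := by
  have hstable : ∃ k, ∀ ℓ, k ≤ ℓ → optSeq prog db α ℓ = optSeq prog db α k := ⟨k, hk⟩
  rw [OE, dif_pos hstable, ← hstable.choose_spec _ (le_max_left _ k), hk _ (le_max_right _ _)]

theorem OE_eq_zero_of_forall_not_mem (h : ∀ i, α ∉ (naiveSeq prog db i).facts) :
    OE prog db α = 0 := by
  unfold OE
  split_ifs with hstable
  · rw [optSeq_eq_naiveSeq_s6 (fun m _ => h m) le_rfl]
    exact (naiveSeq prog db _).ann_eq_zero α (h _)
  · rfl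

end OptSeq

theorem statement_6_general (P C K : Type) [CommSemiring K]
    (prog : Set (Rule P C)) (hprog : prog.Finite)
    (db : AnnDB P C K) (hfin : db.facts.Finite)
    (α : Fact P C) :
    OE prog db α = MDT prog db α := by
  rcases isEmpty_or_nonempty (DTree prog db.facts α) with hnone | hsome
  · have hnot : ∀ i, α ∉ (naiveSeq prog db i).facts := fun i hα => by
      rw [naiveSeq_facts] at hα
      exact hnone.elim hα.choose
    rw [OE_eq_zero_of_forall_not_mem hnot, MDT, finsum_of_isEmpty]
  · set t₀ := Function.argmin (DTree.depth (prog := prog) (D := db.facts) (a := α))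
    have ht₀ : t₀.minimalDepth := fun t => Function.argmin_le _ t
    have hbefore : ∀ m < t₀.depth, α ∉ (naiveSeq prog db m).facts := fun m hm hα => by
      rw [naiveSeq_facts] at hα
      obtain ⟨t, ht⟩ := hα
      exact absurd (ht₀ t) (by omega)
    have hopt : optSeq prog db α t₀.depth = naiveSeq prog db t₀.depth :=
      optSeq_eq_naiveSeq_s6 hbefore le_rfl
    have hα : α ∈ (optSeq prog db α t₀.depth).facts := by
      rw [hopt, naiveSeq_facts]
      exact ⟨t₀, le_rfl⟩
    rw [OE_eq_of_forall_optSeq_eq fun ℓ => optSeq_eq_of_mem_s6 hα, hopt, naiveSeq_ann hprog hfin,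
      MDT]
    exact finsum_congr fun t => by simp only [DTree.minimalDepth_iff ht₀, Set.mem_ofPred_eq]

/-- the optimized execution semantics equals the minimal-depth-tree
semantics. -/
theorem statement_6 (P C K : Type) [CommSemiring K]
    (prog : Set (Rule P C)) (hprog : prog.Finite)
    (db : AnnDB P C K) (hfin : db.facts.Finite)
    (hann : ∀ a ∈ db.facts, db.ann a ≠ 0) (α : Fact P C) :
    OE prog db α = MDT prog db α :=
  statement_6_general P C K prog hprog db hfin α

end Datalog
end

section
/- The seminaive execution provenance semantics equals the hereditary-minimal-depth-tree semantics: for every Datalog program Σ, annotated database (D,K,λ) over a commutative semiring K, and fact α, SNE(Σ,D,K,λ,α) = HMDT(Σ,D,K,λ,α). -/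
attribute [local instance] Classical.propDecidable

namespace Datalog

variable {P C K : Type}

/-!
The `n`-th seminaive stage consists exactly of the facts having a derivation tree of depth at
most `n`. Such facts lie in `D` or instantiate a rule head with the finitely many constants of
`D` and of the rule heads, so the stages stabilize. A fact first derived at stage `n + 1` has
minimal depth `n + 1`, and its hereditary minimal-depth trees correspond bijectively to the rule
applications over stage `n` deriving it, each paired with hereditary minimal-depth trees of its
body facts. By
distributivity, the sum of products that `Δ_Σ` assigns to it is therefore the sum of the weights
of those trees, and the equality follows by induction on `n`.
-/

section Finiteness

variable {P C : Type} {prog : Set (Rule P C)} {D : Set (Fact P C)}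

lemma Rule.exists_mem_args_body_subst (r : Rule P C) (σ : Fin r.nvars → C) (v : Fin r.nvars) :
    ∃ j, σ v ∈ ((r.body j).subst σ).args := by
  obtain ⟨j, hj⟩ := r.vars_in_body v
  exact ⟨j, List.mem_map.mpr ⟨.var v, hj, rfl⟩⟩

lemma finite_dbConsts (hD : D.Finite) : (dbConsts D).Finite := by
  have : dbConsts D = ⋃ a ∈ D, {c | c ∈ a.args} := by ext; simp [dbConsts]
  exact this ▸ hD.biUnion fun a _ => a.args.finite_toSet

def headConsts (prog : Set (Rule P C)) : Set C :=
  {c | ∃ r ∈ prog, Term.const c ∈ r.head.args}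

lemma finite_headConsts (hprog : prog.Finite) : (headConsts prog).Finite := by
  have : headConsts prog =
      ⋃ r ∈ prog, (Term.const (V := Fin r.nvars)) ⁻¹' {u | u ∈ r.head.args} := by
    ext; simp [headConsts]
  exact this ▸ hprog.biUnion fun r _ =>
    r.head.args.finite_toSet.preimage fun _ _ _ _ h => by injection h

lemma finite_ruleInstances (hprog : prog.Finite) {s : Set C} (hs : s.Finite) :
    {p : (r : Rule P C) × (Fin r.nvars → C) | p.1 ∈ prog ∧ ∀ v, p.2 v ∈ s}.Finite := by
  refine (hprog.biUnion fun r _ =>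
    ((Set.Finite.pi fun _ : Fin r.nvars => hs).image (Sigma.mk r))).subset ?_
  rintro ⟨r, σ⟩ ⟨hr, hσ⟩
  exact Set.mem_biUnion hr ⟨σ, fun v _ => hσ v, rfl⟩

def ruleApps (prog : Set (Rule P C)) (I : Set (Fact P C)) (a : Fact P C) :
    Set ((r : Rule P C) × (Fin r.nvars → C)) :=
  {p | p.1 ∈ prog ∧ (∀ j, (p.1.body j).subst p.2 ∈ I) ∧ p.1.head.subst p.2 = a}

lemma finite_ruleApps (hprog : prog.Finite) {I : Set (Fact P C)} (hI : I.Finite) (a : Fact P C) :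
    (ruleApps prog I a).Finite := by
  refine (finite_ruleInstances hprog (finite_dbConsts hI)).subset ?_
  rintro ⟨r, σ⟩ ⟨hr, hbody, -⟩
  refine ⟨hr, fun v => ?_⟩
  obtain ⟨j, hj⟩ := r.exists_mem_args_body_subst σ v
  exact ⟨_, hbody j, hj⟩

def herbrandBase (prog : Set (Rule P C)) (D : Set (Fact P C)) : Set (Fact P C) :=
  D ∪ (fun p : (r : Rule P C) × (Fin r.nvars → C) => p.1.head.subst p.2) ''
    {p | p.1 ∈ prog ∧ ∀ v, p.2 v ∈ dbConsts D ∪ headConsts prog}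

lemma finite_herbrandBase (hprog : prog.Finite) (hD : D.Finite) :
    (herbrandBase prog D).Finite :=
  hD.union <|
    (finite_ruleInstances hprog <| (finite_dbConsts hD).union (finite_headConsts hprog)).image _

lemma mem_consts_of_mem_herbrandBase {a : Fact P C} (ha : a ∈ herbrandBase prog D) {c : C}
    (hc : c ∈ a.args) : c ∈ dbConsts D ∪ headConsts prog := by
  rcases ha with ha | ⟨⟨r, σ⟩, ⟨hr, hσ⟩, rfl⟩
  · exact Or.inl ⟨a, ha, hc⟩
  · obtain ⟨u, hu, rfl⟩ := List.mem_map.mp hc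
    cases u with
    | const c => exact Or.inr ⟨r, hr, hu⟩
    | var v => exact hσ v

lemma DTree.mem_herbrandBase {a : Fact P C} (t : DTree prog D a) : a ∈ herbrandBase prog D := by
  induction t with
  | leaf a ha => exact Or.inl ha
  | node r hr σ ch ih =>
    refine Or.inr ⟨⟨r, σ⟩, ⟨hr, fun v => ?_⟩, rfl⟩
    obtain ⟨j, hj⟩ := r.exists_mem_args_body_subst σ v
    exact mem_consts_of_mem_herbrandBase (ih j) hj

end Finiteness

section Depth

variable {P C : Type} {prog : Set (Rule P C)} {D : Set (Fact P C)}

def derivableWithin (prog : Set (Rule P C)) (D : Set (Fact P C)) (n : ℕ) : Set (Fact P C) :=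
  {a | ∃ t : DTree prog D a, t.depth ≤ n}

lemma DTree.depth_node_le_succ_iff_s8 {r : Rule P C} {hr : r ∈ prog} {σ : Fin r.nvars → C}
    {ch : ∀ j, DTree prog D ((r.body j).subst σ)} {n : ℕ} :
    (DTree.node r hr σ ch).depth ≤ n + 1 ↔ ∀ j, (ch j).depth ≤ n := by
  simp only [DTree.depth, Nat.add_le_add_iff_right, Finset.sup_le_iff, Finset.mem_univ,
    true_implies]

lemma derivableWithin_zero : derivableWithin prog D 0 = D := by
  ext a
  refine ⟨fun ⟨t, ht⟩ => ?_, fun ha => ⟨.leaf a ha, le_rfl⟩⟩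
  cases t with
  | leaf _ ha => exact ha
  | node => simp [DTree.depth] at ht

lemma derivableWithin_succ (n : ℕ) :
    derivableWithin prog D (n + 1) =
      derivableWithin prog D n ∪ derivable prog (derivableWithin prog D n) := by
  ext a
  constructor
  · rintro ⟨t, ht⟩
    cases t with
    | leaf _ ha => exact Or.inl ⟨.leaf _ ha, Nat.zero_le _⟩
    | node r hr σ ch =>
      exact Or.inr ⟨r, hr, σ, fun j => ⟨ch j, DTree.depth_node_le_succ_iff_s8.mp ht j⟩, rfl⟩
  · rintro (⟨t, ht⟩ | ⟨r, hr, σ, hbody, rfl⟩)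
    · exact ⟨t, ht.trans n.le_succ⟩
    · choose ch hch using hbody
      exact ⟨.node r hr σ ch, DTree.depth_node_le_succ_iff_s8.mpr hch⟩

lemma derivableWithin_mono : Monotone (derivableWithin prog D) :=
  fun _ _ hmn _ ⟨t, ht⟩ => ⟨t, ht.trans hmn⟩

lemma derivableWithin_subset_herbrandBase (n : ℕ) :
    derivableWithin prog D n ⊆ herbrandBase prog D :=
  fun _ ⟨t, _⟩ => t.mem_herbrandBase

lemma finite_derivableWithin (hprog : prog.Finite) (hD : D.Finite) (n : ℕ) :
    (derivableWithin prog D n).Finite :=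
  (finite_herbrandBase hprog hD).subset (derivableWithin_subset_herbrandBase n)

lemma exists_derivable_subset_derivableWithin (hprog : prog.Finite) (hD : D.Finite) :
    ∃ n, derivable prog (derivableWithin prog D n) ⊆ derivableWithin prog D n := by
  obtain ⟨m, n, hmn, heq⟩ :=
    (finite_herbrandBase hprog hD).powerset.exists_lt_map_eq_of_forall_mem
      (f := derivableWithin prog D) derivableWithin_subset_herbrandBase
  refine ⟨m, fun a ha => heq ▸ derivableWithin_mono hmn ?_⟩
  rw [derivableWithin_succ]
  exact Or.inr ha

end Depth

section HereditaryMinimal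

variable {P C : Type} {prog : Set (Rule P C)} {D : Set (Fact P C)}

lemma DTree.hereditaryMinimal.minimalDepth {a : Fact P C} {t : DTree prog D a}
    (ht : t.hereditaryMinimal) : t.minimalDepth := by
  cases t with
  | leaf => exact fun _ => Nat.zero_le _
  | node => exact ht.1

lemma DTree.hereditaryMinimal.depth_le {a : Fact P C} {t : DTree prog D a} {n : ℕ}
    (ht : t.hereditaryMinimal) (ha : a ∈ derivableWithin prog D n) : t.depth ≤ n :=
  let ⟨t', ht'⟩ := ha
  (ht.minimalDepth t').trans ht'

lemma DTree.hereditaryMinimal_iff_eq_leaf {a : Fact P C} (ha : a ∈ D) (t : DTree prog D a) :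
    t.hereditaryMinimal ↔ t = .leaf a ha := by
  refine ⟨fun ht => ?_, fun ht => ht ▸ trivial⟩
  cases t with
  | leaf => rfl
  | node => exact absurd (ht.depth_le (n := 0) ⟨.leaf _ ha, le_rfl⟩) (by simp [DTree.depth])

lemma DTree.hereditaryMinimal_node_iff {r : Rule P C} {hr : r ∈ prog} {σ : Fin r.nvars → C}
    {ch : ∀ j, DTree prog D ((r.body j).subst σ)} {n : ℕ}
    (ha : r.head.subst σ ∈ derivableWithin prog D (n + 1))
    (ha' : r.head.subst σ ∉ derivableWithin prog D n) :
    (DTree.node r hr σ ch).hereditaryMinimal ↔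
      (∀ j, (r.body j).subst σ ∈ derivableWithin prog D n) ∧
        ∀ j, (ch j).hereditaryMinimal := by
  constructor
  · intro ht
    have hdepth := DTree.depth_node_le_succ_iff_s8.mp (ht.depth_le ha)
    exact ⟨fun j => ⟨ch j, hdepth j⟩, ht.2⟩
  · rintro ⟨hbody, hch⟩
    refine ⟨fun t' => ?_, hch⟩
    have hdepth : (DTree.node r hr σ ch).depth ≤ n + 1 :=
      DTree.depth_node_le_succ_iff_s8.mpr fun j => (hch j).depth_le (hbody j)
    have ht' : n + 1 ≤ t'.depth := by
      by_contra! h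
      exact ha' ⟨t', Nat.le_of_lt_succ h⟩
    omega

def hereditaryMinimalEquiv {a : Fact P C} {n : ℕ} (ha : a ∈ derivableWithin prog D (n + 1))
    (ha' : a ∉ derivableWithin prog D n) :
    {t : DTree prog D a // t.hereditaryMinimal} ≃
      Σ p : ruleApps prog (derivableWithin prog D n) a,
        ∀ j, {t : DTree prog D ((p.1.1.body j).subst p.1.2) // t.hereditaryMinimal} where
  toFun := fun ⟨t, ht⟩ => match t, ht with
    | .leaf _ h, _ => absurd ⟨.leaf _ h, Nat.zero_le n⟩ ha'
    | .node r hr σ ch, ht =>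
      ⟨⟨⟨r, σ⟩, hr, ((DTree.hereditaryMinimal_node_iff ha ha').mp ht).1, rfl⟩,
        fun j => ⟨ch j, ht.2 j⟩⟩
  invFun := fun ⟨⟨⟨r, σ⟩, hr, hbody, h⟩, ch⟩ =>
    ⟨h ▸ .node r hr σ fun j => (ch j).1, by
      subst h
      exact (DTree.hereditaryMinimal_node_iff ha ha').mpr ⟨hbody, fun j => (ch j).2⟩⟩
  left_inv := by
    rintro ⟨t, ht⟩
    cases t with
    | leaf _ h => exact absurd ⟨.leaf _ h, Nat.zero_le n⟩ ha'
    | node => rfl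
  right_inv := by
    rintro ⟨⟨⟨r, σ⟩, hr, hbody, h⟩, ch⟩
    subst h
    rfl

lemma weight_hereditaryMinimalEquiv_symm {K : Type} [CommSemiring K] (lam : Fact P C → K)
    {a : Fact P C} {n : ℕ} (ha : a ∈ derivableWithin prog D (n + 1))
    (ha' : a ∉ derivableWithin prog D n) (y) :
    ((hereditaryMinimalEquiv ha ha').symm y).1.weight lam = ∏ j, (y.2 j).1.weight lam := by
  obtain ⟨⟨⟨r, σ⟩, hr, hbody, h⟩, ch⟩ := y
  subst h
  rfl

end HereditaryMinimal

lemma finsum_prod_finsum {K ι : Type*} [CommSemiring K] {J : ι → Type*} [∀ i, Fintype (J i)]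
    {X : (i : ι) → J i → Type*} [Finite ι] [∀ i j, Finite (X i j)]
    (f : ∀ i j, X i j → K) :
    ∑ᶠ i, ∏ j, ∑ᶠ x, f i j x = ∑ᶠ y : Σ i, ∀ j, X i j, ∏ j, f y.1 j (y.2 j) := by
  have := Fintype.ofFinite ι
  have := fun i j => Fintype.ofFinite (X i j)
  simp only [finsum_eq_sum_of_fintype, Fintype.prod_sum, Fintype.sum_sigma]

section Provenance

variable {P C K : Type} [CommSemiring K] {prog : Set (Rule P C)} {D : Set (Fact P C)}

lemma ruleSum_eq_finsum_hereditaryMinimal (lam μ : Fact P C → K) (hprog : prog.Finite)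
    (hD : D.Finite) {a : Fact P C} {n : ℕ} (ha : a ∈ derivableWithin prog D (n + 1))
    (ha' : a ∉ derivableWithin prog D n)
    (ih : ∀ b ∈ derivableWithin prog D n, Finite {t : DTree prog D b // t.hereditaryMinimal} ∧
      μ b = ∑ᶠ t : {t : DTree prog D b // t.hereditaryMinimal}, t.1.weight lam) :
    Finite {t : DTree prog D a // t.hereditaryMinimal} ∧
      ruleSum prog (derivableWithin prog D n) μ a =
        ∑ᶠ t : {t : DTree prog D a // t.hereditaryMinimal}, t.1.weight lam := by
  have := (finite_ruleApps hprog (finite_derivableWithin hprog hD n) a).to_subtype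
  have : ∀ p : ruleApps prog (derivableWithin prog D n) a, ∀ j,
      Finite {t : DTree prog D ((p.1.1.body j).subst p.1.2) // t.hereditaryMinimal} :=
    fun p j => (ih _ (p.2.2.1 j)).1
  refine ⟨(hereditaryMinimalEquiv ha ha').finite_iff.mpr inferInstance, ?_⟩
  rw [ruleSum, ← finsum_subtype_eq_finsum_cond,
    ← finsum_comp_equiv (hereditaryMinimalEquiv ha ha').symm]
  simp only [weight_hereditaryMinimalEquiv_symm]
  rw [← finsum_prod_finsum fun p j (t : {t : DTree prog D _ // _}) => t.1.weight lam]
  exact finsum_congr fun p => Finset.prod_congr rfl fun j _ => (ih _ (p.2.2.1 j)).2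

end Provenance

lemma AnnDB.ext {P C K : Type} [Zero K] {d₁ d₂ : AnnDB P C K} (hfacts : d₁.facts = d₂.facts)
    (hann : d₁.ann = d₂.ann) : d₁ = d₂ := by
  cases d₁; cases d₂; cases hfacts; cases hann; rfl

section Seminaive

variable {P C K : Type} [CommSemiring K] {prog : Set (Rule P C)} {db : AnnDB P C K}

lemma semiSeq_facts_succ (n : ℕ) :
    (semiSeq prog db (n + 1)).facts =
      (semiSeq prog db n).facts ∪ derivable prog (semiSeq prog db n).facts :=
  Set.union_sdiff_self

lemma semiSeq_facts_eq_derivableWithin (n : ℕ) :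
    (semiSeq prog db n).facts = derivableWithin prog db.facts n := by
  induction n with
  | zero => exact derivableWithin_zero.symm
  | succ n ih => rw [semiSeq_facts_succ, derivableWithin_succ, ih]

lemma semiSeq_ann_succ_of_mem {n : ℕ} {a : Fact P C} (ha : a ∈ (semiSeq prog db n).facts) :
    (semiSeq prog db (n + 1)).ann a = (semiSeq prog db n).ann a := by
  simp [semiSeq, AnnDB.union, Dcons, ha]

lemma semiSeq_ann_succ_of_notMem {n : ℕ} {a : Fact P C} (ha : a ∉ (semiSeq prog db n).facts)
    (hder : a ∈ derivable prog (semiSeq prog db n).facts) :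
    (semiSeq prog db (n + 1)).ann a =
      ruleSum prog (semiSeq prog db n).facts (semiSeq prog db n).ann a := by
  simp [semiSeq, AnnDB.union, Dcons, Tcons, ha, hder, (semiSeq prog db n).ann_eq_zero a ha]

lemma semiSeq_succ_eq_self {n : ℕ}
    (h : derivable prog (semiSeq prog db n).facts ⊆ (semiSeq prog db n).facts) :
    semiSeq prog db (n + 1) = semiSeq prog db n := by
  have hfacts : (semiSeq prog db (n + 1)).facts = (semiSeq prog db n).facts :=
    (semiSeq_facts_succ n).trans (Set.union_eq_self_of_subset_right h)
  refine AnnDB.ext hfacts (funext fun a => ?_)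
  by_cases ha : a ∈ (semiSeq prog db n).facts
  · exact semiSeq_ann_succ_of_mem ha
  · rw [AnnDB.ann_eq_zero _ a (hfacts ▸ ha), AnnDB.ann_eq_zero _ a ha]

lemma semiSeq_stabilizes (hprog : prog.Finite) (hfin : db.facts.Finite) :
    ∃ k, ∀ ℓ, k ≤ ℓ → semiSeq prog db ℓ = semiSeq prog db k := by
  obtain ⟨k, hk⟩ := exists_derivable_subset_derivableWithin hprog hfin
  refine ⟨k, fun ℓ hℓ => ?_⟩
  induction ℓ, hℓ using Nat.le_induction with
  | base => rfl
  | succ ℓ hℓ ih =>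
    rw [semiSeq_succ_eq_self, ih]
    rwa [ih, semiSeq_facts_eq_derivableWithin]

lemma semiSeq_ann_eq_finsum_hereditaryMinimal (hprog : prog.Finite) (hfin : db.facts.Finite)
    (n : ℕ) : ∀ a ∈ (semiSeq prog db n).facts,
      Finite {t : DTree prog db.facts a // t.hereditaryMinimal} ∧
        (semiSeq prog db n).ann a =
          ∑ᶠ t : {t : DTree prog db.facts a // t.hereditaryMinimal}, t.1.weight db.ann := by
  induction n with
  | zero =>
    intro a (ha : a ∈ db.facts)
    have hiff := DTree.hereditaryMinimal_iff_eq_leaf (prog := prog) ha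
    refine ⟨((Set.finite_singleton _).subset fun t ht => (hiff t).mp ht).to_subtype, ?_⟩
    rw [finsum_subtype_eq_finsum_cond]
    simp_rw [hiff]
    rw [finsum_cond_eq_left]
    rfl
  | succ n ih =>
    intro a ha
    by_cases ha' : a ∈ (semiSeq prog db n).facts
    · rw [semiSeq_ann_succ_of_mem ha']
      exact ih a ha'
    · have hder : a ∈ derivable prog (semiSeq prog db n).facts := by
        rw [semiSeq_facts_succ] at ha
        exact ha.resolve_left ha'
      rw [semiSeq_ann_succ_of_notMem ha' hder]
      rw [semiSeq_facts_eq_derivableWithin] at ha ha' ih ⊢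
      exact ruleSum_eq_finsum_hereditaryMinimal db.ann _ hprog hfin ha ha' ih

end Seminaive

theorem statement_8_general (P C K : Type) [CommSemiring K]
    (prog : Set (Rule P C)) (hprog : prog.Finite)
    (db : AnnDB P C K) (hfin : db.facts.Finite)
    (α : Fact P C) :
    SNE prog db α = HMDT prog db α := by
  have hstab := semiSeq_stabilizes hprog hfin
  rw [SNE, dif_pos hstab, HMDT, ← finsum_subtype_eq_finsum_cond]
  set k := hstab.choose
  by_cases hα : α ∈ (semiSeq prog db k).facts
  · exact (semiSeq_ann_eq_finsum_hereditaryMinimal hprog hfin k α hα).2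
  · have : IsEmpty (DTree prog db.facts α) := ⟨fun t => hα <| by
      rw [← hstab.choose_spec (max k t.depth) (le_max_left _ _), semiSeq_facts_eq_derivableWithin]
      exact ⟨t, le_max_right _ _⟩⟩
    rw [(semiSeq prog db k).ann_eq_zero α hα, finsum_of_isEmpty]

/-- the seminaive execution semantics equals the
hereditary-minimal-depth-tree semantics. -/
theorem statement_8 (P C K : Type) [CommSemiring K]
    (prog : Set (Rule P C)) (hprog : prog.Finite)
    (db : AnnDB P C K) (hfin : db.facts.Finite)
    (hann : ∀ a ∈ db.facts, db.ann a ≠ 0) (α : Fact P C) :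
    SNE prog db α = HMDT prog db α :=
  statement_8_general P C K prog hprog db hfin α

end Datalog
end
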